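/- Yao's principle for lower bounds (Theorem 5, abstract form). Let I and D be nonempty types (inputs and deterministic algorithms), cost : D → I → ℝ≥0 and opt : I → ℝ≥0 functions, and c > 1 a real constant. Assume that for every ε > 0 and every α ∈ ℝ there exists a finitely supported probability distribution p on I such that for every d ∈ D: Σ_σ p(σ)·cost(d,σ) ≥ (c − ε)·(Σ_σ p(σ)·opt(σ)) + α. Then for every probability mass function μ on D, every real c' < c, and every real α', there exists σ ∈ I such that E_{d∼μ}[cost(d,σ)] > c'·opt(σ) + α'. (Equivalently: no randomized algorithm, i.e. distribution over D, is c'-competitive for any c' < c.) -/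

import Mathlib

open scoped ENNReal NNReal

/-! If `μ` were `c'`-competitive, every input `σ` would satisfy
`E_μ cost(·, σ) ≤ c' · opt σ + α'`. Averaging this over the hard input distribution `p` supplied
by the hypothesis for `ε = c - c'` and `α = α' + 1`, and exchanging the order of the two
expectations, gives `c' · E_p opt + α' + 1 ≤ E_p E_μ cost ≤ c' · E_p opt + α'`. -/

theorem ENNReal.ne_top_of_toEReal_le_coe {x : ℝ≥0∞} {r : ℝ} (h : (x : EReal) ≤ r) : x ≠ ⊤ := by
  rintro rfl
  exact (EReal.coe_lt_top r).not_ge h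

theorem ENNReal.toReal_le_of_toEReal_le_coe {x : ℝ≥0∞} {r : ℝ} (h : (x : EReal) ≤ r) :
    x.toReal ≤ r := by
  rw [← EReal.coe_ennreal_toReal (ENNReal.ne_top_of_toEReal_le_coe h)] at h
  exact_mod_cast h

theorem PMF.le_tsum_mul_of_forall_le {D : Type*} (μ : PMF D) {a : ℝ≥0∞} {g : D → ℝ≥0∞}
    (h : ∀ d, a ≤ g d) : a ≤ ∑' d, μ d * g d :=
  calc a = ∑' d, μ d * a := by rw [ENNReal.tsum_mul_right, μ.tsum_coe, one_mul]
    _ ≤ ∑' d, μ d * g d := ENNReal.tsum_le_tsum fun d => by gcongr; exact h d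

theorem ENNReal.sum_mul_tsum_comm {I D : Type*} (S : Finset I) (w : I → ℝ≥0∞)
    (μ : D → ℝ≥0∞) (f : D → I → ℝ≥0∞) :
    ∑ σ ∈ S, w σ * ∑' d, μ d * f d σ = ∑' d, μ d * ∑ σ ∈ S, w σ * f d σ := by
  simp_rw [Finset.mul_sum, ← ENNReal.tsum_mul_left]
  rw [Summable.tsum_finsetSum fun _ _ => ENNReal.summable]
  simp_rw [mul_left_comm]

-- Exchanging the two expectations: `E_p E_μ cost = E_μ E_p cost ≥ L`.
theorem PMF.le_sum_mul_toReal_tsum {I D : Type*} (μ : PMF D) (cost : D → I → ℝ≥0)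
    (S : Finset I) (p : I → ℝ) (hp : ∀ σ, 0 ≤ p σ) {L : ℝ}
    (hL : ∀ d, L ≤ ∑ σ ∈ S, p σ * cost d σ)
    (hfin : ∀ σ ∈ S, ∑' d, μ d * (cost d σ : ℝ≥0∞) ≠ ⊤) :
    L ≤ ∑ σ ∈ S, p σ * (∑' d, μ d * (cost d σ : ℝ≥0∞)).toReal := by
  have hsum : ∑ σ ∈ S, p σ * (∑' d, μ d * (cost d σ : ℝ≥0∞)).toReal =
      (∑ σ ∈ S, ENNReal.ofReal (p σ) * ∑' d, μ d * (cost d σ : ℝ≥0∞)).toReal := by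
    rw [ENNReal.toReal_sum fun σ hσ => ENNReal.mul_ne_top ENNReal.ofReal_ne_top (hfin σ hσ)]
    simp_rw [ENNReal.toReal_mul, ENNReal.toReal_ofReal (hp _)]
  have hinner : ∀ d, ∑ σ ∈ S, ENNReal.ofReal (p σ) * (cost d σ : ℝ≥0∞) =
      ENNReal.ofReal (∑ σ ∈ S, p σ * cost d σ) := by
    intro d
    rw [ENNReal.ofReal_sum_of_nonneg (f := fun σ => p σ * cost d σ)
      fun σ _ => mul_nonneg (hp σ) (cost d σ).2]
    simp_rw [ENNReal.ofReal_mul (hp _), ENNReal.ofReal_coe_nnreal]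
  rw [hsum, ← ENNReal.ofReal_le_iff_le_toReal
    (ENNReal.sum_ne_top.2 fun σ hσ => ENNReal.mul_ne_top ENNReal.ofReal_ne_top (hfin σ hσ)),
    ENNReal.sum_mul_tsum_comm]
  simp_rw [hinner]
  exact μ.le_tsum_mul_of_forall_le fun d => ENNReal.ofReal_le_ofReal (hL d)

theorem yao_principle
    {I D : Type*}
    (cost : D → I → ℝ≥0) (opt : I → ℝ≥0)
    (c : ℝ)
    (H : ∀ ε : ℝ, 0 < ε → ∀ α : ℝ, ∃ (S : Finset I) (p : I → ℝ),
      (∀ σ, 0 ≤ p σ) ∧ (∀ σ ∉ S, p σ = 0) ∧ (∑ σ ∈ S, p σ) = 1 ∧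
      ∀ d : D, ∑ σ ∈ S, p σ * (cost d σ : ℝ)
        ≥ (c - ε) * (∑ σ ∈ S, p σ * (opt σ : ℝ)) + α)
    (μ : PMF D) (c' α' : ℝ) (hc' : c' < c) :
    ∃ σ : I, ((c' * (opt σ : ℝ) + α' : ℝ) : EReal)
      < ((∑' d : D, μ d * (cost d σ : ℝ≥0∞)) : ℝ≥0∞).toEReal := by
  by_contra! hbounded
  obtain ⟨S, p, hp, -, hp_one, hcost⟩ := H (c - c') (sub_pos.2 hc') (α' + 1)
  set T := ∑ σ ∈ S, p σ * (opt σ : ℝ)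
  have lower := μ.le_sum_mul_toReal_tsum cost S p hp (L := c' * T + (α' + 1))
    (fun d => by simpa only [sub_sub_cancel] using hcost d)
    (fun σ _ => ENNReal.ne_top_of_toEReal_le_coe (hbounded σ))
  have upper : ∑ σ ∈ S, p σ * (∑' d, μ d * (cost d σ : ℝ≥0∞)).toReal ≤ c' * T + α' :=
    calc _ ≤ ∑ σ ∈ S, p σ * (c' * opt σ + α') := Finset.sum_le_sum fun σ _ =>
          mul_le_mul_of_nonneg_left (ENNReal.toReal_le_of_toEReal_le_coe (hbounded σ)) (hp σ)
      _ = c' * T + α' := by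
          simp only [mul_add, Finset.sum_add_distrib, ← Finset.sum_mul, hp_one, one_mul,
            mul_left_comm (p _), ← Finset.mul_sum]
          rfl
  linarith
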